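/- Let ν be an infinite regular cardinal with ν^{<ν} = ν. For every dense continuous homomorphism f : ν^{<ν} → ν^{<ν}, we have ran(f*) ∩ Cl_ν ≠ ∅ and ran(f*) ∩ Ns_ν ≠ ∅. -/

import Mathlib

universe u

noncomputable section

/-! ## Sequences of ordinals

`SeqLT o v` is the set `v^{<o}` of all sequences of ordinals `< v` of length `< o`
(for `o > 0`; values beyond the length are normalized to `0`).
`SeqFull o v` is the generalized Baire space `v^o` of all functions from ordinals `< o`
to ordinals `< v`. -/

/-- An element of `v^{<o}`: a sequence of ordinals `< v` of length `< o`. -/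
structure SeqLT (o v : Ordinal.{u}) : Type (u + 1) where
  len : Ordinal.{u}
  len_lt : len < o ⊔ 1
  val : Ordinal.{u} → Ordinal.{u}
  val_lt : ∀ β, β < len → val β < v
  val_zero : ∀ β, len ≤ β → val β = 0

namespace SeqLT

variable {o v : Ordinal.{u}}

/-- `s ⊆ t`, i.e. `t` end-extends `s`. -/
protected def le (s t : SeqLT o v) : Prop :=
  s.len ≤ t.len ∧ ∀ β, β < s.len → s.val β = t.val β

/-- `s ⊊ t`, i.e. `t` properly end-extends `s`. -/
protected def slt (s t : SeqLT o v) : Prop :=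
  s.le t ∧ s.len < t.len

/-- The empty sequence. -/
protected def empty (o v : Ordinal.{u}) : SeqLT o v where
  len := 0
  len_lt := lt_sup_iff.mpr (Or.inr zero_lt_one)
  val := fun _ => 0
  val_lt := fun β h => absurd h (not_lt.mpr zero_le)
  val_zero := fun _ _ => rfl

/-- `s⌢⟨β⟩`: the sequence `s` extended by the single value `β`. -/
def snoc (s : SeqLT o v) (β : Ordinal.{u}) : SeqLT o v :=
  if h : s.len + 1 < o ⊔ 1 ∧ β < v then
    { len := s.len + 1
      len_lt := h.1
      val := fun γ => if γ = s.len then β else s.val γ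
      val_lt := fun γ hγ => by
        rcases eq_or_ne γ s.len with rfl | hne
        · simpa using h.2
        · simp only [if_neg hne]
          refine s.val_lt γ (lt_of_le_of_ne ?_ hne)
          rw [Ordinal.add_one_eq_succ] at hγ
          exact Order.lt_succ_iff.mp hγ
      val_zero := fun γ hγ => by
        have h1 : s.len < γ :=
          lt_of_lt_of_le (by rw [Ordinal.add_one_eq_succ]; exact Order.lt_succ s.len) hγ
        simp only [if_neg h1.ne']
        exact s.val_zero γ h1.le }
  else s

protected theorem le_refl (s : SeqLT o v) : s.le s :=
  ⟨le_rfl, fun _ _ => rfl⟩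

protected theorem le_trans {s t u : SeqLT o v} (h1 : s.le t) (h2 : t.le u) : s.le u :=
  ⟨h1.1.trans h2.1, fun β hβ => (h1.2 β hβ).trans (h2.2 β (lt_of_lt_of_le hβ h1.1))⟩

end SeqLT

/-- An element of the generalized Baire space `v^o`. -/
structure SeqFull (o v : Ordinal.{u}) : Type (u + 1) where
  val : Ordinal.{u} → Ordinal.{u}
  val_lt : ∀ β, β < o → val β < v
  val_zero : ∀ β, o ≤ β → val β = 0

/-- The restriction `x ↾ β` of `x : v^o` to an ordinal `β < o`. -/
def SeqFull.res {o v : Ordinal.{u}} (x : SeqFull o v) (β : Ordinal.{u}) : SeqLT o v :=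
  if h : β < o ⊔ 1 then
    { len := β
      len_lt := h
      val := fun γ => if γ < β then x.val γ else 0
      val_lt := fun γ hγ => by
        simp only [if_pos hγ]
        rcases lt_sup_iff.mp h with h' | h'
        · exact x.val_lt γ (hγ.trans h')
        · rw [Ordinal.lt_one_iff_zero] at h'
          exact absurd (h' ▸ hγ) (not_lt.mpr zero_le)
      val_zero := fun γ hγ => if_neg (not_lt.mpr hγ) }
  else SeqLT.empty o v

/-- `s ⊆ x`: the sequence `s` is an initial segment of `x : v^o`. -/
def SeqLT.prefixOf {o v : Ordinal.{u}} (s : SeqLT o v) (x : SeqFull o v) : Prop :=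
  ∀ β, β < s.len → s.val β = x.val β

/-! ## The bounded topology -/

/-- The basic open set `N_t`. -/
def basicOpen {o v : Ordinal.{u}} (t : SeqLT o v) : Set (SeqFull o v) :=
  {x | t.prefixOf x}

/-- The bounded (standard) topology on the generalized Baire space, generated by the
basic open sets `N_t`. -/
instance (o v : Ordinal.{u}) : TopologicalSpace (SeqFull o v) :=
  TopologicalSpace.generateFrom {U | ∃ t : SeqLT o v, U = basicOpen t}

/-- `A` is a nowhere dense subset of `B` (in the subspace topology on `B`). -/
def NowhereDenseIn {o v : Ordinal.{u}} (A B : Set (SeqFull o v)) : Prop :=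
  A ⊆ B ∧ interior (closure {x : ↥B | (x : SeqFull o v) ∈ A}) = ∅

/-- `A` is `o`-meager in `B`: `A ∩ B` is the union of (card of) `o` many nowhere dense
subsets of `B`. -/
def MeagerIn {o v : Ordinal.{u}} (A B : Set (SeqFull o v)) : Prop :=
  ∃ F : {β : Ordinal.{u} // β < o} → Set (SeqFull o v),
    (∀ i, NowhereDenseIn (F i) B) ∧ A ∩ B = ⋃ i, F i

/-- `A` is comeager in `B`: `B \ A` is meager in `B`. -/
def ComeagerIn {o v : Ordinal.{u}} (A B : Set (SeqFull o v)) : Prop :=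
  MeagerIn (B \ A) B

/-- `A` has the `o`-Baire property: for some open `U`, `A △ U` is meager. -/
def BaireSet {o v : Ordinal.{u}} (A : Set (SeqFull o v)) : Prop :=
  ∃ U : Set (SeqFull o v), IsOpen U ∧ MeagerIn (symmDiff A U) Set.univ

/-! ## Homomorphisms of `v^{<o}` -/

/-- A homomorphism: strictly extension-preserving map of `v^{<o}` to itself. -/
def IsHom {o v : Ordinal.{u}} (f : SeqLT o v → SeqLT o v) : Prop :=
  ∀ s t : SeqLT o v, s.slt t → (f s).slt (f t)

/-- `f` is dense: for every `s` and every `t ⊇ f(s)` there is `β < v` with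
`f(s⌢⟨β⟩) ⊇ t`. -/
def IsDenseMap {o v : Ordinal.{u}} (f : SeqLT o v → SeqLT o v) : Prop :=
  ∀ s t : SeqLT o v, (f s).le t → ∃ β, β < v ∧ t.le (f (s.snoc β))

/-- `u = ⋃_{α<γ} s α` for a chain `s`. -/
def IsUnionOfChain {o v : Ordinal.{u}} (u : SeqLT o v) (γ : Ordinal.{u})
    (s : Ordinal.{u} → SeqLT o v) : Prop :=
  (∀ α, α < γ → (s α).le u) ∧ ∀ β, β < u.len → ∃ α, α < γ ∧ β < (s α).len

/-- `f` is continuous: for every limit `γ < o` and every strictly increasing sequence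
`⟨s_α : α < γ⟩`, `f(⋃_{α<γ} s_α) = ⋃_{α<γ} f(s_α)`. -/
def IsContinuousMap {o v : Ordinal.{u}} (f : SeqLT o v → SeqLT o v) : Prop :=
  ∀ γ : Ordinal.{u}, Order.IsSuccLimit γ → γ < o →
    ∀ s : Ordinal.{u} → SeqLT o v, (∀ α β, α < β → β < γ → (s α).slt (s β)) →
      ∀ u : SeqLT o v, IsUnionOfChain u γ s → IsUnionOfChain (f u) γ fun α => f (s α)

/-- `y = f*(x) = ⋃_{α<o} f(x↾α)` for a homomorphism `f`. -/
def FStarVal {o v : Ordinal.{u}} (f : SeqLT o v → SeqLT o v) (x y : SeqFull o v) : Prop :=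
  (∀ α, α < o → (f (x.res α)).prefixOf y) ∧
    ∀ β, β < o → ∃ α, α < o ∧ β < (f (x.res α)).len

/-! ## Clubs and the almost Baire property -/

/-- `C` is a club (closed unbounded set) in the ordinal `o`. -/
def IsClubIn (C : Set Ordinal.{u}) (o : Ordinal.{u}) : Prop :=
  (∀ γ ∈ C, γ < o) ∧ (∀ β, β < o → ∃ γ ∈ C, β ≤ γ) ∧
    ∀ β, β < o → 0 < β → (∀ γ, γ < β → ∃ ξ ∈ C, γ < ξ ∧ ξ < β) → β ∈ C

/-- The set of functions coding elements of the club filter as characteristic functions. -/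
def ClSet (o v : Ordinal.{u}) : Set (SeqFull o v) :=
  {x | ∃ C : Set Ordinal.{u}, IsClubIn C o ∧ ∀ i ∈ C, x.val i ≠ 0}

/-- The set of functions coding elements of the nonstationary ideal. -/
def NsSet (o v : Ordinal.{u}) : Set (SeqFull o v) :=
  {x | ∃ C : Set Ordinal.{u}, IsClubIn C o ∧ ∀ i ∈ C, x.val i = 0}

/-- `A` is almost Baire: there is a dense homomorphism `f` with `ran f* ⊆ A`, or a dense
continuous homomorphism `f` with `f ∅ = ∅` and `ran f* ⊆ Aᶜ`. -/
def AlmostBaire {o v : Ordinal.{u}} (A : Set (SeqFull o v)) : Prop :=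
  ∃ f : SeqLT o v → SeqLT o v, IsHom f ∧ IsDenseMap f ∧
    ((∀ x y, FStarVal f x y → y ∈ A) ∨
      ((∀ x y, FStarVal f x y → y ∉ A) ∧ IsContinuousMap f ∧
        f (SeqLT.empty o v) = SeqLT.empty o v))

/-! ## Banach–Mazur games of length `o`

A run of the game is a strictly increasing sequence `⟨s_α : α < o⟩` in `v^{<o}`;
player I plays at even positions (`0` and limits count as even), player II at odd ones.
In the game `G^t` the first move of player I must extend `t`; taking `t = ∅` gives the
plain Banach–Mazur game. -/

/-- `γ` is an even ordinal (`0` and limits are even). -/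
def EvenOrd (γ : Ordinal.{u}) : Prop := ∃ δ : Ordinal.{u}, γ = 2 * δ

/-- `γ` is an odd ordinal. -/
def OddOrd (γ : Ordinal.{u}) : Prop := ∃ δ : Ordinal.{u}, γ = 2 * δ + 1

/-- The moves of a (partial) run, as a function on ordinals. -/
abbrev Play (o v : Ordinal.{u}) := Ordinal.{u} → SeqLT o v

/-- A strategy: given the length of the current position and the moves so far,
produce the next move. -/
abbrev Strat (o v : Ordinal.{u}) := Ordinal.{u} → Play o v → SeqLT o v

/-- `p` is a legal partial run of length `γ` of the game `G^t`: strictly increasing moves,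
the first move extends `t`, and the moves beyond `γ` are normalized to `∅`. -/
def IsPos {o v : Ordinal.{u}} (t : SeqLT o v) (p : Play o v) (γ : Ordinal.{u}) : Prop :=
  (∀ α β, α < β → β < γ → (p α).slt (p β)) ∧ (0 < γ → t.le (p 0)) ∧
    ∀ α, γ ≤ α → p α = SeqLT.empty o v

/-- The restriction of a run to its first `γ` moves. -/
def resPlay {o v : Ordinal.{u}} (p : Play o v) (γ : Ordinal.{u}) : Play o v :=
  fun α => if α < γ then p α else SeqLT.empty o v

/-- `m` is a legal move at the position `p` of length `γ` in the game `G^t`. -/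
def MoveOK {o v : Ordinal.{u}} (t : SeqLT o v) (p : Play o v) (γ : Ordinal.{u})
    (m : SeqLT o v) : Prop :=
  (∀ α, α < γ → (p α).slt m) ∧ (γ = 0 → t.le m)

/-- `σ` is a strategy for player I in `G^t`: it assigns a legal move to every legal
position of even length. -/
def LegalI {o v : Ordinal.{u}} (t : SeqLT o v) (σ : Strat o v) : Prop :=
  ∀ γ, γ < o → EvenOrd γ → ∀ p, IsPos t p γ → MoveOK t p γ (σ γ p)

/-- `σ` is a strategy for player II in `G^t`: it assigns a legal move to every legal
position of odd length. -/
def LegalII {o v : Ordinal.{u}} (t : SeqLT o v) (σ : Strat o v) : Prop :=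
  ∀ γ, γ < o → OddOrd γ → ∀ p, IsPos t p γ → MoveOK t p γ (σ γ p)

/-- The first `γ` moves of `p` follow the strategy `σ` of player I. -/
def FollowsI {o v : Ordinal.{u}} (σ : Strat o v) (p : Play o v) (γ : Ordinal.{u}) : Prop :=
  ∀ α, α < γ → EvenOrd α → p α = σ α (resPlay p α)

/-- The first `γ` moves of `p` follow the strategy `σ` of player II. -/
def FollowsII {o v : Ordinal.{u}} (σ : Strat o v) (p : Play o v) (γ : Ordinal.{u}) : Prop :=
  ∀ α, α < γ → OddOrd α → p α = σ α (resPlay p α)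

/-- `x = ⋃_{α<o} p α` is the outcome of the complete run `p`. -/
def IsOutcome {o v : Ordinal.{u}} (p : Play o v) (x : SeqFull o v) : Prop :=
  (∀ α, α < o → (p α).prefixOf x) ∧ ∀ β, β < o → ∃ α, α < o ∧ β < (p α).len

/-- Player I has a winning strategy in the Banach–Mazur game `G^t(A)` of length `o`. -/
def WinIStrat {o v : Ordinal.{u}} (t : SeqLT o v) (A : Set (SeqFull o v)) : Prop :=
  ∃ σ : Strat o v, LegalI t σ ∧
    ∀ p : Play o v, IsPos t p o → FollowsI σ p o → ∃ x, IsOutcome p x ∧ x ∈ A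

/-- Player II has a winning strategy in the Banach–Mazur game `G^t(A)` of length `o`. -/
def WinIIStrat {o v : Ordinal.{u}} (t : SeqLT o v) (A : Set (SeqFull o v)) : Prop :=
  ∃ σ : Strat o v, LegalII t σ ∧
    ∀ p : Play o v, IsPos t p o → FollowsII σ p o → ∃ x, IsOutcome p x ∧ x ∉ A

/-- `σ` is a tactic for player II: its moves depend only on the union of the previous moves. -/
def IsTacticII {o v : Ordinal.{u}} (t : SeqLT o v) (σ : Strat o v) : Prop :=
  ∃ f : SeqLT o v → SeqLT o v, ∀ γ, γ < o → OddOrd γ → ∀ p, IsPos t p γ →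
    ∀ u, IsUnionOfChain u γ p → σ γ p = f u

/-- Player II has a winning tactic in the Banach–Mazur game `G^t(A)` of length `o`. -/
def WinIITactic {o v : Ordinal.{u}} (t : SeqLT o v) (A : Set (SeqFull o v)) : Prop :=
  ∃ σ : Strat o v, LegalII t σ ∧ IsTacticII t σ ∧
    ∀ p : Play o v, IsPos t p o → FollowsII σ p o → ∃ x, IsOutcome p x ∧ x ∉ A

/-! ## Trees and perfect sets -/

/-- A subtree of `v^{<o}`: a downwards closed set of sequences. -/
def IsSubtree {o v : Ordinal.{u}} (T : Set (SeqLT o v)) : Prop :=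
  ∀ s ∈ T, ∀ r : SeqLT o v, r.le s → r ∈ T

/-- `T` is closed: every strictly increasing sequence in `T` of length `< o` has an
upper bound in `T`. -/
def TreeClosed {o v : Ordinal.{u}} (T : Set (SeqLT o v)) : Prop :=
  ∀ γ : Ordinal.{u}, γ < o → ∀ s : Ordinal.{u} → SeqLT o v,
    (∀ α β, α < β → β < γ → (s α).slt (s β)) → (∀ α, α < γ → s α ∈ T) →
      ∃ b ∈ T, ∀ α, α < γ → (s α).le b

/-- `t` is a direct successor of `s`. -/
def IsDirectSucc {o v : Ordinal.{u}} (s t : SeqLT o v) : Prop :=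
  s.slt t ∧ t.len = s.len + 1

/-- `T` is a perfect tree: a (nonempty) closed subtree whose splitting nodes are cofinal. -/
def IsPerfectTree {o v : Ordinal.{u}} (T : Set (SeqLT o v)) : Prop :=
  T.Nonempty ∧ IsSubtree T ∧ TreeClosed T ∧
    ∀ s ∈ T, ∃ t ∈ T, s.le t ∧
      ∃ t₁ ∈ T, ∃ t₂ ∈ T, IsDirectSucc t t₁ ∧ IsDirectSucc t t₂ ∧ t₁ ≠ t₂

/-- The body `[T]` of a tree `T`: the set of branches of length `o` through `T`. -/
def treeBody {o v : Ordinal.{u}} (T : Set (SeqLT o v)) : Set (SeqFull o v) :=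
  {x | ∀ α, α < o → x.res α ∈ T}

/-! Build `x` one coordinate at a time, using density at stage `α` to choose `x(α)` so that
`f(x↾(α+1))` extends `f(x↾α)⌢⟨c⟩`. Then `y = f*(x)` takes the value `c` at every length
`|f(x↾α)|`, and these lengths form a club: they increase strictly with `α`, and by continuity of
`f` they are continuous at limits. Taking `c = 1` and `c = 0` gives the two points of `ran f*`. -/

namespace SeqLT

variable {o v : Ordinal.{u}}

theorem ext_of_len_val {s t : SeqLT o v} (hlen : s.len = t.len) (hval : s.val = t.val) :
    s = t := by
  cases s; cases t; cases hlen; cases hval; rfl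

theorem len_lt_of_pos (ho : 0 < o) (s : SeqLT o v) : s.len < o := by
  simpa [sup_eq_left.mpr (Order.one_le_iff_pos.mpr ho)] using s.len_lt

theorem snoc_len {s : SeqLT o v} {β : Ordinal.{u}} (hs : s.len + 1 < o ⊔ 1) (hβ : β < v) :
    (s.snoc β).len = s.len + 1 := by
  rw [snoc, dif_pos ⟨hs, hβ⟩]

theorem snoc_val {s : SeqLT o v} {β : Ordinal.{u}} (hs : s.len + 1 < o ⊔ 1) (hβ : β < v)
    (γ : Ordinal.{u}) : (s.snoc β).val γ = if γ = s.len then β else s.val γ := by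
  rw [snoc, dif_pos ⟨hs, hβ⟩]

theorem le_snoc (s : SeqLT o v) (β : Ordinal.{u}) : s.le (s.snoc β) := by
  unfold snoc
  split_ifs
  · exact ⟨le_self_add, fun γ hγ => (if_neg hγ.ne).symm⟩
  · exact s.le_refl

theorem snoc_val_len {s : SeqLT o v} {β : Ordinal.{u}} (hs : s.len + 1 < o ⊔ 1) (hβ : β < v) :
    (s.snoc β).val s.len = β := by
  rw [snoc_val hs hβ, if_pos rfl]

end SeqLT

namespace SeqFull

variable {o v : Ordinal.{u}}

theorem res_len (x : SeqFull o v) {α : Ordinal.{u}} (hα : α < o) : (x.res α).len = α := by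
  rw [res, dif_pos (lt_sup_of_lt_left hα)]

theorem res_val (x : SeqFull o v) {α : Ordinal.{u}} (hα : α < o) (γ : Ordinal.{u}) :
    (x.res α).val γ = if γ < α then x.val γ else 0 := by
  rw [res, dif_pos (lt_sup_of_lt_left hα)]

theorem res_congr {x y : SeqFull o v} {α : Ordinal.{u}} (h : ∀ γ < α, x.val γ = y.val γ) :
    x.res α = y.res α := by
  unfold res
  split_ifs
  · refine SeqLT.ext_of_len_val rfl (funext fun γ => ?_)
    simp only
    split_ifs with hγ
    exacts [h γ hγ, rfl]
  · rfl

theorem res_le_res (x : SeqFull o v) {α β : Ordinal.{u}} (hαβ : α ≤ β) (hβ : β < o) :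
    (x.res α).le (x.res β) := by
  have hα := hαβ.trans_lt hβ
  refine ⟨by rw [x.res_len hα, x.res_len hβ]; exact hαβ, fun γ hγ => ?_⟩
  rw [x.res_len hα] at hγ
  rw [x.res_val hα, x.res_val hβ, if_pos hγ, if_pos (hγ.trans_le hαβ)]

theorem res_slt_res (x : SeqFull o v) {α β : Ordinal.{u}} (hαβ : α < β) (hβ : β < o) :
    (x.res α).slt (x.res β) :=
  ⟨x.res_le_res hαβ.le hβ, by rw [x.res_len (hαβ.trans hβ), x.res_len hβ]; exact hαβ⟩

theorem res_add_one (x : SeqFull o v) {α : Ordinal.{u}} (hα : α + 1 < o) :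
    x.res (α + 1) = (x.res α).snoc (x.val α) := by
  have hαo : α < o := (lt_add_one α).trans hα
  have hs : (x.res α).len + 1 < o ⊔ 1 := by
    rw [x.res_len hαo]; exact lt_sup_of_lt_left hα
  have hxα : x.val α < v := x.val_lt α hαo
  refine SeqLT.ext_of_len_val ?_ (funext fun γ => ?_)
  · rw [SeqLT.snoc_len hs hxα, x.res_len hαo, x.res_len hα]
  · rw [SeqLT.snoc_val hs hxα, x.res_len hαo, x.res_val hα, x.res_val hαo]
    rcases lt_trichotomy γ α with hγ | rfl | hγ
    · rw [if_neg hγ.ne, if_pos hγ, if_pos (hγ.trans (lt_add_one α))]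
    · rw [if_pos rfl, if_pos (lt_add_one γ)]
    · rw [if_neg hγ.ne', if_neg hγ.not_gt, if_neg (Order.add_one_le_iff.mpr hγ).not_gt]

def ofFun (g : Ordinal.{u} → {β : Ordinal.{u} // β < v}) : SeqFull o v where
  val β := if β < o then g β else 0
  val_lt β hβ := by simp only [if_pos hβ]; exact (g β).2
  val_zero β hβ := if_neg hβ.not_gt

def recBranch (next : SeqLT o v → {β : Ordinal.{u} // β < v}) : SeqFull o v :=
  -- the filler `next ∅` sits at coordinates `≥ α`, which `res α` ignores
  ofFun <| Ordinal.lt_wf.fix fun α ih =>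
    next ((ofFun fun β => if h : β < α then ih β h else next (SeqLT.empty o v)).res α)

theorem recBranch_val (next : SeqLT o v → {β : Ordinal.{u} // β < v}) {α : Ordinal.{u}}
    (hα : α < o) : (recBranch next).val α = next ((recBranch next).res α) := by
  change (if α < o then _ else 0) = _
  rw [if_pos hα, WellFounded.fix_eq]
  congr 2
  refine res_congr fun γ hγ => ?_
  simp only [ofFun, dif_pos hγ]
  rfl

end SeqFull

section Club

variable {o : Ordinal.{u}} {F : Ordinal.{u} → Ordinal.{u}}

theorem le_apply_of_strictMonoOn (hF : StrictMonoOn F (Set.Iio o)) {α : Ordinal.{u}}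
    (hα : α < o) : α ≤ F α := by
  induction α using WellFoundedLT.induction with
  | _ α ih =>
    by_contra! h
    exact (ih _ h (h.trans hα)).not_gt (hF (h.trans hα) hα h)

theorem isClubIn_image (hF : StrictMonoOn F (Set.Iio o)) (hlt : ∀ α < o, F α < o)
    (hcont : ∀ δ < o, Order.IsSuccLimit δ → ∀ ξ < F δ, ∃ α < δ, ξ < F α) :
    IsClubIn (F '' Set.Iio o) o := by
  refine ⟨?_, fun β hβ => ⟨F β, Set.mem_image_of_mem F hβ, le_apply_of_strictMonoOn hF hβ⟩,
    ?_⟩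
  · rintro _ ⟨α, hα, rfl⟩
    exact hlt α hα
  intro β hβ hβ0 hacc
  -- `F` attains `β` at the least `δ` with `β ≤ F δ`.
  have hS : {α | α < o ∧ β ≤ F α}.Nonempty := ⟨β, hβ, le_apply_of_strictMonoOn hF hβ⟩
  set δ := sInf {α | α < o ∧ β ≤ F α}
  obtain ⟨hδ, hβδ⟩ : δ < o ∧ β ≤ F δ := csInf_mem hS
  have hbelow : ∀ α < δ, F α < β := fun α hα =>
    lt_of_not_ge fun h => notMem_of_lt_csInf' hα ⟨hα.trans hδ, h⟩
  have habove : ∀ ε, δ ≤ ε → ε < o → β ≤ F ε := fun ε hε hεo =>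
    hβδ.trans ((hF.le_iff_le hδ hεo).mpr hε)
  refine ⟨δ, hδ, le_antisymm ?_ hβδ⟩
  rcases Ordinal.zero_or_succ_or_isSuccLimit δ with h0 | ⟨γ, hγδ⟩ | hlim
  · obtain ⟨_, ⟨ε, hε, rfl⟩, -, hεβ⟩ := hacc 0 hβ0
    exact absurd (habove ε (h0 ▸ zero_le (a := ε)) hε) hεβ.not_ge
  · have hγ : γ < δ := hγδ ▸ Order.lt_succ γ
    obtain ⟨_, ⟨ε, hε, rfl⟩, hγε, hεβ⟩ := hacc (F γ) (hbelow γ hγ)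
    have hγε' : γ < ε := (hF.lt_iff_lt (hγ.trans hδ) hε).mp hγε
    exact absurd (habove ε (hγδ ▸ Order.succ_le_of_lt hγε') hε) hεβ.not_ge
  · by_contra! h
    obtain ⟨α, hα, hβα⟩ := hcont δ hδ hlim β h
    exact (hbelow α hα).not_gt hβα

end Club

section Branch

variable {o v : Ordinal.{u}} {f : SeqLT o v → SeqLT o v}

theorem IsHom.le_of_le (hf : IsHom f) {s t : SeqLT o v} (hst : s.le t) : (f s).le (f t) := by
  rcases hst.1.lt_or_eq with hlt | heq
  · exact (hf s t ⟨hst, hlt⟩).1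
  · obtain rfl : s = t := SeqLT.ext_of_len_val heq (funext fun β => by
      by_cases hβ : β < s.len
      · exact hst.2 β hβ
      · rw [s.val_zero β (not_lt.mp hβ), t.val_zero β (heq ▸ not_lt.mp hβ)])
    exact (f s).le_refl

theorem IsHom.le_res (hf : IsHom f) (x : SeqFull o v) {α β : Ordinal.{u}} (hαβ : α ≤ β)
    (hβ : β < o) : (f (x.res α)).le (f (x.res β)) :=
  hf.le_of_le (x.res_le_res hαβ hβ)

theorem IsHom.strictMonoOn_len_res (hf : IsHom f) (x : SeqFull o v) :
    StrictMonoOn (fun α => (f (x.res α)).len) (Set.Iio o) :=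
  fun _ _ _ hβ hαβ => (hf _ _ (x.res_slt_res hαβ hβ)).2

theorem IsContinuousMap.exists_lt_len_res (hf : IsContinuousMap f) (x : SeqFull o v)
    {δ : Ordinal.{u}} (hδ : δ < o) (hlim : Order.IsSuccLimit δ) {ξ : Ordinal.{u}}
    (hξ : ξ < (f (x.res δ)).len) : ∃ α < δ, ξ < (f (x.res α)).len := by
  refine (hf δ hlim hδ x.res (fun α β hαβ hβ => x.res_slt_res hαβ (hβ.trans hδ))
    (x.res δ) ⟨fun α hα => x.res_le_res hα.le hδ, fun β hβ => ?_⟩).2 ξ hξ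
  rw [x.res_len hδ] at hβ
  have hβ1 : β + 1 < δ := hlim.add_one_lt hβ
  exact ⟨β + 1, hβ1, by rw [x.res_len (hβ1.trans hδ)]; exact lt_add_one β⟩

theorem isClubIn_image_len_res (ho : 0 < o) (hhom : IsHom f) (hcont : IsContinuousMap f)
    (x : SeqFull o v) : IsClubIn ((fun α => (f (x.res α)).len) '' Set.Iio o) o :=
  isClubIn_image (hhom.strictMonoOn_len_res x) (fun _ _ => (f _).len_lt_of_pos ho)
    fun _ hδ hlim _ hξ => hcont.exists_lt_len_res x hδ hlim hξ

theorem IsHom.exists_fStarVal (ho : Order.IsSuccLimit o) (hf : IsHom f) (x : SeqFull o v) :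
    ∃ y, FStarVal f x y := by
  have hmem : ∀ β < o, β < (f (x.res (β + 1))).len := fun β hβ =>
    (lt_add_one β).trans_le
      (le_apply_of_strictMonoOn (hf.strictMonoOn_len_res x) (ho.add_one_lt hβ))
  refine ⟨⟨fun β => if β < o then (f (x.res (β + 1))).val β else 0, fun β hβ => ?_,
    fun β hβ => if_neg hβ.not_gt⟩, fun α hα β hβ => ?_,
    fun β hβ => ⟨β + 1, ho.add_one_lt hβ, hmem β hβ⟩⟩
  · simp only [if_pos hβ]
    exact (f _).val_lt β (hmem β hβ)
  · have hβo : β < o := hβ.trans ((f _).len_lt_of_pos ho.pos)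
    simp only [if_pos hβo]
    rcases le_total α (β + 1) with h | h
    · exact (hf.le_res x h (ho.add_one_lt hβo)).2 β hβ
    · exact ((hf.le_res x h hα).2 β (hmem β hβo)).symm

end Branch

namespace IsDenseMap

variable {o v : Ordinal.{u}} {f : SeqLT o v → SeqLT o v}

def step (hf : IsDenseMap f) (c : Ordinal.{u}) (s : SeqLT o v) :
    {β : Ordinal.{u} // β < v} :=
  ⟨(hf s ((f s).snoc c) ((f s).le_snoc c)).choose,
    (hf s ((f s).snoc c) ((f s).le_snoc c)).choose_spec.1⟩

theorem snoc_le_step (hf : IsDenseMap f) (c : Ordinal.{u}) (s : SeqLT o v) :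
    ((f s).snoc c).le (f (s.snoc (hf.step c s))) :=
  (hf s ((f s).snoc c) ((f s).le_snoc c)).choose_spec.2

def branch (hf : IsDenseMap f) (c : Ordinal.{u}) : SeqFull o v :=
  SeqFull.recBranch (hf.step c)

theorem snoc_le_branch_res (hf : IsDenseMap f) (c : Ordinal.{u}) {α : Ordinal.{u}}
    (hα : α + 1 < o) :
    ((f ((hf.branch c).res α)).snoc c).le (f ((hf.branch c).res (α + 1))) := by
  rw [SeqFull.res_add_one _ hα, branch, SeqFull.recBranch_val _ ((lt_add_one α).trans hα)]
  exact hf.snoc_le_step c _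

theorem val_len_eq_of_fStarVal_branch (hf : IsDenseMap f) (c : Ordinal.{u})
    (ho : Order.IsSuccLimit o) (hc : c < v) {y : SeqFull o v} (hy : FStarVal f (hf.branch c) y)
    {α : Ordinal.{u}} (hα : α < o) :
    y.val (f ((hf.branch c).res α)).len = c := by
  set s := f ((hf.branch c).res α)
  have hs : s.len + 1 < o ⊔ 1 := lt_sup_of_lt_left (ho.add_one_lt (s.len_lt_of_pos ho.pos))
  have hα1 : α + 1 < o := ho.add_one_lt hα
  have hle := hf.snoc_le_branch_res c hα1
  have hlt : s.len < (s.snoc c).len := by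
    rw [SeqLT.snoc_len hs hc]
    exact lt_add_one _
  calc y.val s.len = (f ((hf.branch c).res (α + 1))).val s.len :=
        (hy.1 _ hα1 _ (hlt.trans_le hle.1)).symm
    _ = (s.snoc c).val s.len := (hle.2 _ hlt).symm
    _ = c := SeqLT.snoc_val_len hs hc

theorem exists_fStarVal_eq_on_club (hf : IsDenseMap f) (c : Ordinal.{u})
    (ho : Order.IsSuccLimit o) (hhom : IsHom f) (hcont : IsContinuousMap f) (hc : c < v) :
    ∃ x y, FStarVal f x y ∧ ∃ C, IsClubIn C o ∧ ∀ i ∈ C, y.val i = c := by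
  obtain ⟨y, hy⟩ := hhom.exists_fStarVal ho (hf.branch c)
  refine ⟨_, y, hy, _, isClubIn_image_len_res ho.pos hhom hcont (hf.branch c), ?_⟩
  rintro _ ⟨α, hα, rfl⟩
  exact hf.val_len_eq_of_fStarVal_branch c ho hc hy hα

end IsDenseMap

theorem statement6_general (ν : Cardinal.{u}) (hreg : ν.IsRegular)
    (f : SeqLT ν.ord ν.ord → SeqLT ν.ord ν.ord)
    (hhom : IsHom f) (hdense : IsDenseMap f) (hcont : IsContinuousMap f) :
    (∃ x y, FStarVal f x y ∧ y ∈ ClSet ν.ord ν.ord) ∧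
      (∃ x y, FStarVal f x y ∧ y ∈ NsSet ν.ord ν.ord) := by
  have ho : Order.IsSuccLimit ν.ord := Cardinal.isSuccLimit_ord hreg.aleph0_le
  obtain ⟨x, y, hy, C, hC, hCy⟩ :=
    hdense.exists_fStarVal_eq_on_club 1 ho hhom hcont (Ordinal.one_lt_of_isSuccLimit ho)
  obtain ⟨x', y', hy', C', hC', hCy'⟩ :=
    hdense.exists_fStarVal_eq_on_club 0 ho hhom hcont ho.pos
  exact ⟨⟨x, y, hy, C, hC, fun i hi => hCy i hi ▸ one_ne_zero⟩,
    ⟨x', y', hy', C', hC', hCy'⟩⟩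

/-- For an infinite regular cardinal `ν` with `ν^{<ν} = ν` and every dense continuous
homomorphism `f : ν^{<ν} → ν^{<ν}`, the range of `f*` meets both `Cl_ν` and `Ns_ν`. -/
theorem statement6 (ν : Cardinal.{u}) (hreg : ν.IsRegular)
    (hpow : Cardinal.powerlt ν ν = ν)
    (f : SeqLT ν.ord ν.ord → SeqLT ν.ord ν.ord)
    (hhom : IsHom f) (hdense : IsDenseMap f) (hcont : IsContinuousMap f) :
    (∃ x y, FStarVal f x y ∧ y ∈ ClSet ν.ord ν.ord) ∧
      (∃ x y, FStarVal f x y ∧ y ∈ NsSet ν.ord ν.ord) :=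
  statement6_general ν hreg f hhom hdense hcont

end
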